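/- arXiv:1909.01111 — 5 statements merged into one kernel-verified Lean document; each statement's English description precedes it below -/
import Mathlib

section
/- For all n ≥ 2, p(n) ≤ p(n-1) + p(n-2), where p is the partition counting function. -/
/-!
A partition of `n + 2` either contains a part `1`, whose removal leaves a partition of `n + 1`,
or it does not, and then trading its largest part `a ≥ 2` for `a - 2` ones leaves a partition
of `n`. The second map is injective because the ones it creates are the only ones present:
their number `k` tells us that the removed part was `k + 2`.
-/

open Multiset

theorem Multiset.sup_mem {α : Type*} [LinearOrder α] [OrderBot α] {s : Multiset α} (hs : s ≠ 0) :
    s.sup ∈ s := by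
  obtain ⟨a, ha, hmax⟩ := s.exists_max_image id hs
  have hsup : s.sup = a := le_antisymm (Multiset.sup_le.2 hmax) (le_sup ha)
  exact hsup ▸ ha

theorem Multiset.cons_filter_erase_add_replicate {s : Multiset ℕ} {a : ℕ} (ha : a ∈ s)
    (h1 : 1 ∉ s) (h2 : 2 ≤ a) :
    (count 1 (s.erase a + replicate (a - 2) 1) + 2) ::ₘ
      (s.erase a + replicate (a - 2) 1).filter (· ≠ 1) = s := by
  have h1' : 1 ∉ s.erase a := fun h => h1 (mem_of_mem_erase h)
  rw [count_add, count_eq_zero.2 h1', count_replicate_self, filter_add,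
    filter_eq_self.2 fun b hb => ne_of_mem_of_not_mem hb h1',
    filter_eq_nil.2 fun b hb => not_not.2 (eq_of_mem_replicate hb), add_zero,
    zero_add, Nat.sub_add_cancel h2, cons_erase ha]

namespace Nat.Partition

variable {n : ℕ}

theorem two_le_of_mem_of_one_notMem (p : Partition n) (h1 : 1 ∉ p.parts) {a : ℕ}
    (ha : a ∈ p.parts) : 2 ≤ a := by
  have := p.parts_pos ha
  have : a ≠ 1 := ne_of_mem_of_not_mem ha h1
  omega

theorem parts_ne_zero (p : Partition (n + 1)) : p.parts ≠ 0 := by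
  intro h
  simpa [h] using p.parts_sum

def eraseOne (p : Partition (n + 1)) (h : 1 ∈ p.parts) : Partition n where
  parts := p.parts.erase 1
  parts_pos hi := p.parts_pos (mem_of_mem_erase hi)
  parts_sum := by
    have := sum_erase h
    rw [p.parts_sum] at this
    omega

def shrinkLargest (p : Partition (n + 2)) (h : 1 ∉ p.parts) : Partition n where
  parts := p.parts.erase p.parts.sup + replicate (p.parts.sup - 2) 1
  parts_pos hi := by
    rcases mem_add.1 hi with hi | hi
    · exact p.parts_pos (mem_of_mem_erase hi)
    · rw [eq_of_mem_replicate hi]; exact Nat.one_pos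
  parts_sum := by
    have hsup := sup_mem p.parts_ne_zero
    have h2 := p.two_le_of_mem_of_one_notMem h hsup
    have := sum_erase hsup
    rw [p.parts_sum] at this
    rw [sum_add, sum_replicate, smul_eq_mul, mul_one]
    omega

def shrink (p : Partition (n + 2)) : Partition (n + 1) ⊕ Partition n :=
  if h : 1 ∈ p.parts then .inl (p.eraseOne h) else .inr (p.shrinkLargest h)

def unshrink : Partition (n + 1) ⊕ Partition n → Multiset ℕ
  | .inl q => 1 ::ₘ q.parts
  | .inr q => (Multiset.count 1 q.parts + 2) ::ₘ q.parts.filter (· ≠ 1)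

theorem unshrink_shrink (p : Partition (n + 2)) : unshrink (shrink p) = p.parts := by
  unfold shrink
  split_ifs with h
  · exact cons_erase h
  · have hsup := sup_mem p.parts_ne_zero
    exact cons_filter_erase_add_replicate hsup h (p.two_le_of_mem_of_one_notMem h hsup)

theorem shrink_injective : Function.Injective (shrink : Partition (n + 2) → _) :=
  Function.Injective.of_comp (f := unshrink) fun p q hpq =>
    Partition.ext (by simpa only [Function.comp_apply, unshrink_shrink] using hpq)

end Nat.Partition

theorem partition_fib_bound (n : ℕ) (hn : 2 ≤ n) :
    Fintype.card (Nat.Partition n) ≤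
      Fintype.card (Nat.Partition (n - 1)) + Fintype.card (Nat.Partition (n - 2)) := by
  obtain ⟨m, rfl⟩ := Nat.exists_eq_add_of_le' hn
  rw [show m + 2 - 1 = m + 1 from rfl, Nat.add_sub_cancel, ← Fintype.card_sum]
  exact Fintype.card_le_of_injective _ Nat.Partition.shrink_injective
end

section
/- There exists a real constant γ < 1 (for instance γ = (1+√5)/4) such that for every real q ≥ 2 and all positive integers a, b and non-negative integer N with a(b-1) ≥ N, we have p(b)/q^(a(b-1)) < 2γ^N. -/
/-!
A partition of `n + 2` either has a part `1`, and removing it leaves a partition of `n + 1`, or it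
has none; then splitting any one part `s` into `s - 2` ones gives a partition of `n` from which the
original is recovered by merging all ones, plus two, into a single part. Hence
`p(n + 2) ≤ p(n + 1) + p(n)` and `p(n) ≤ φⁿ`, so with `M = a(b - 1) ≥ b - 1` and `γ = φ / 2`,
`p(b) / q^M ≤ φ^b / 2^M < 2 (φ / 2)^M ≤ 2 γ^N`.
-/

open Real
open scoped goldenRatio

namespace Nat.Partition

def mergeOnes {n : ℕ} (μ : n.Partition) : (n + 2).Partition where
  parts := (μ.parts.count 1 + 2) ::ₘ μ.parts.filter (· ≠ 1)
  parts_pos {i} hi := by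
    rcases Multiset.mem_cons.1 hi with rfl | hi
    · omega
    · exact μ.parts_pos (Multiset.mem_of_mem_filter hi)
  parts_sum := by
    have h := Multiset.sum_filter_add_sum_filter_not (· = 1) (s := μ.parts)
    rw [Multiset.filter_eq', Multiset.sum_replicate, μ.parts_sum] at h
    simp only [Multiset.sum_cons, smul_eq_mul, mul_one, ne_eq] at h ⊢
    omega

lemma one_notMem_mergeOnes_parts {n : ℕ} (μ : n.Partition) : 1 ∉ (mergeOnes μ).parts := by
  simp [mergeOnes]

lemma exists_mergeOnes_eq {n : ℕ} {p : (n + 2).Partition} (hp : 1 ∉ p.parts) :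
    ∃ μ : n.Partition, mergeOnes μ = p := by
  obtain ⟨s, hs⟩ : ∃ s, s ∈ p.parts :=
    Multiset.exists_mem_of_ne_zero fun h => by simpa [h] using p.parts_sum
  have hs2 : 2 ≤ s := by
    have := p.parts_pos hs
    have : s ≠ 1 := fun h => hp (h ▸ hs)
    omega
  have hsum : s + (p.parts.erase s).sum = n + 2 := by
    rw [← Multiset.sum_cons, Multiset.cons_erase hs, p.parts_sum]
  refine ⟨⟨p.parts.erase s + .replicate (s - 2) 1, fun {i} hi => ?_, ?_⟩, ?_⟩
  · rcases Multiset.mem_add.1 hi with hi | hi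
    · exact p.parts_pos (Multiset.mem_of_mem_erase hi)
    · rw [Multiset.eq_of_mem_replicate hi]; exact one_pos
  · simp only [Multiset.sum_add, Multiset.sum_replicate, smul_eq_mul, mul_one]
    omega
  · have hne : 1 ∉ p.parts.erase s := fun h => hp (Multiset.mem_of_mem_erase h)
    ext1
    have hfilter : (p.parts.erase s + .replicate (s - 2) 1).filter (· ≠ 1) = p.parts.erase s := by
      rw [Multiset.filter_add, Multiset.filter_eq_self.2 fun i hi => ne_of_mem_of_not_mem hi hne,
        Multiset.filter_eq_nil.2 fun i hi => not_not.2 (Multiset.eq_of_mem_replicate hi), add_zero]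
    simp only [mergeOnes, Multiset.count_add, Multiset.count_replicate_self,
      Multiset.count_eq_zero.2 hne, hfilter, zero_add, Nat.sub_add_cancel hs2,
      Multiset.cons_erase hs]

lemma card_one_notMem_parts_le (n : ℕ) :
    Fintype.card {p : (n + 2).Partition // 1 ∉ p.parts} ≤ Fintype.card n.Partition :=
  Fintype.card_le_of_surjective (fun μ => ⟨mergeOnes μ, one_notMem_mergeOnes_parts μ⟩)
    fun p => (exists_mergeOnes_eq p.2).imp fun _ h => Subtype.ext h

lemma card_one_mem_parts (n : ℕ) :
    Fintype.card {p : (n + 1).Partition // 1 ∈ p.parts} = Fintype.card n.Partition :=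
  Fintype.card_congr (partitionWithPartEquiv le_rfl (Nat.le_add_left 1 n))

lemma card_add_two_le (n : ℕ) :
    Fintype.card (n + 2).Partition ≤ Fintype.card (n + 1).Partition + Fintype.card n.Partition := by
  have hsplit := Fintype.card_subtype_compl (fun p : (n + 2).Partition => 1 ∈ p.parts)
  have hle := Fintype.card_subtype_le (fun p : (n + 2).Partition => 1 ∈ p.parts)
  have hmem : Fintype.card {p : (n + 2).Partition // 1 ∈ p.parts} = _ := card_one_mem_parts (n + 1)
  have hnotMem := card_one_notMem_parts_le n
  omega

lemma card_le_goldenRatio_pow (n : ℕ) : (Fintype.card n.Partition : ℝ) ≤ goldenRatio ^ n := by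
  induction n using Nat.twoStepInduction with
  | zero => simp
  | one => simpa using one_lt_goldenRatio.le
  | more n ih₀ ih₁ =>
    calc (Fintype.card (n + 2).Partition : ℝ)
        ≤ Fintype.card (n + 1).Partition + Fintype.card n.Partition := by
          exact_mod_cast card_add_two_le n
      _ ≤ goldenRatio ^ (n + 1) + goldenRatio ^ n := by gcongr
      _ = goldenRatio ^ (n + 2) := by rw [pow_add _ n 2, goldenRatio_sq]; ring

end Nat.Partition

lemma card_partition_div_pow_lt {q : ℝ} {b M : ℕ} (hq : 2 ≤ q) (hb : 0 < b) (hbM : b - 1 ≤ M) :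
    (Fintype.card b.Partition : ℝ) / q ^ M < 2 * (φ / 2) ^ M := by
  have hφ : φ ^ b < 2 * φ ^ M := calc
    φ ^ b = φ * φ ^ (b - 1) := by rw [← pow_succ', Nat.sub_add_cancel hb]
    _ < 2 * φ ^ (b - 1) := by gcongr; exact goldenRatio_lt_two
    _ ≤ 2 * φ ^ M := by gcongr; exact one_lt_goldenRatio.le
  calc (Fintype.card b.Partition : ℝ) / q ^ M
      ≤ φ ^ b / 2 ^ M := by
        gcongr
        exact Nat.Partition.card_le_goldenRatio_pow b
    _ < 2 * φ ^ M / 2 ^ M := by gcongr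
    _ = 2 * (φ / 2) ^ M := by rw [mul_div_assoc, ← div_pow]

theorem partition_rare_bound :
    ∃ γ : ℝ, γ < 1 ∧ ∀ (q : ℝ) (a b N : ℕ), 2 ≤ q → 0 < a → 0 < b →
      N ≤ a * (b - 1) →
      (Fintype.card (Nat.Partition b) : ℝ) / q ^ (a * (b - 1)) < 2 * γ ^ N := by
  refine ⟨φ / 2, by linarith [goldenRatio_lt_two], fun q a b N hq ha hb hN => ?_⟩
  calc (Fintype.card b.Partition : ℝ) / q ^ (a * (b - 1))
      < 2 * (φ / 2) ^ (a * (b - 1)) :=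
        card_partition_div_pow_lt hq hb (Nat.le_mul_of_pos_left _ ha)
    _ ≤ 2 * (φ / 2) ^ N := by
        gcongr 2 * ?_
        exact pow_le_pow_of_le_one (by positivity) (by linarith [goldenRatio_lt_two]) hN
end

section
/- Let n ≥ 3 and a > 1 be integers. Write Φ_n(a) = P_n(a)·R_n(a) where P_n(a) is the largest divisor of Φ_n(a) coprime to n and R_n(a) is the part of Φ_n(a) whose prime factors all divide n. Then R_n(a) is a square-free divisor of n. -/
/-!
If `p ∣ n` and `n = m * p`, then `Φ_n(a)` divides `∑_{i<p} b ^ i` with `b = a ^ m`, since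
`(X ^ m - 1) * Φ_n ∣ X ^ n - 1`. For odd `p` dividing that sum, Fermat forces `b ≡ 1 (mod p)`,
and then the sum is `≡ p (mod p ^ 2)`. For `p = 2` the sum is `1 + a ^ m`: if `4 ∣ n` it is
`1 + square`, never divisible by `4`, and if `n = 2m` with `m > 1` odd, `Φ_n(a)` is odd.
Hence no `p ^ 2` with `p ∣ n` divides `Φ_n(a)`, so `R_n(a)` is squarefree, and being
supported on the primes of `n`, it divides `n`.
-/

open Polynomial Finset

theorem Polynomial.cyclotomic_mul_dvd_geom_sum (R : Type*) [CommRing R] {m k : ℕ} (hm : 0 < m)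
    (hk : 1 < k) : cyclotomic (m * k) R ∣ ∑ i ∈ range k, (X ^ m) ^ i := by
  have hmem : m ∈ (m * k).properDivisors :=
    Nat.mem_properDivisors.2 ⟨dvd_mul_right m k, lt_mul_of_one_lt_right hm hk⟩
  have h := X_pow_sub_one_mul_cyclotomic_dvd_X_pow_sub_one_of_dvd R hmem
  rw [pow_mul, ← mul_geom_sum (X ^ m) k] at h
  have hmonic : (X ^ m - 1 : R[X]).Monic := by simpa using monic_X_pow_sub_C (1 : R) hm.ne'
  exact hmonic.isRegular.left.dvd_cancel_left.1 h

theorem Polynomial.eval_cyclotomic_mul_dvd_geom_sum {R : Type*} [CommRing R] {m k : ℕ}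
    (hm : 0 < m) (hk : 1 < k) (x : R) :
    eval x (cyclotomic (m * k) R) ∣ ∑ i ∈ range k, (x ^ m) ^ i := by
  simpa [eval_finsetSum] using eval_dvd (x := x) (cyclotomic_mul_dvd_geom_sum R hm hk)

theorem not_sq_dvd_geom_sum_of_dvd {p : ℕ} (hp : p.Prime) (hodd : Odd p) {b : ℤ}
    (h : (p : ℤ) ∣ ∑ i ∈ range p, b ^ i) : ¬ (p : ℤ) ^ 2 ∣ ∑ i ∈ range p, b ^ i := by
  obtain ⟨c, hc⟩ : (p : ℤ) ∣ b - 1 := by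
    have hpow : (p : ℤ) ∣ b ^ p - 1 := by
      rw [← mul_geom_sum]
      exact h.mul_left _
    simpa using dvd_sub hpow (Int.prime_dvd_pow_self_sub hp b)
  have hsub : (p : ℤ) ^ 2 ∣ ∑ i ∈ range p, b ^ i - p := by
    simpa [show b = 1 + p * c by linarith] using odd_sq_dvd_geom_sum₂_sub (1 : ℤ) c hodd
  intro hsq
  have hself : (p : ℤ) ^ 2 ∣ (p : ℤ) ^ 1 := by simpa using dvd_sub hsq hsub
  have hpZ := Nat.prime_iff_prime_int.mp hp
  have := (pow_dvd_pow_iff hpZ.ne_zero hpZ.not_isUnit).1 hself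
  omega

theorem Int.not_four_dvd_one_add_sq (x : ℤ) : ¬ 4 ∣ 1 + x ^ 2 := by
  intro h
  have h4 := (ZMod.intCast_zmod_eq_zero_iff_dvd (1 + x ^ 2) 4).2 (by exact_mod_cast h)
  push_cast at h4
  generalize (x : ZMod 4) = y at h4
  revert y
  decide

theorem not_two_dvd_eval_cyclotomic_two_mul {m : ℕ} (hm : Odd m) (hm1 : m ≠ 1) (a : ℤ) :
    ¬ 2 ∣ eval a (cyclotomic (2 * m) ℤ) := by
  -- `Φ_{2m}(a)` divides `1 + a ^ m` and a geometric sum with an odd number `q` of terms: if it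
  -- were even, `a` would be odd and that sum would be `≡ q ≡ 1 (mod 2)`.
  intro h2
  have hq := Nat.minFac_prime hm1
  have hqodd : Odd m.minFac := hm.of_dvd_nat (Nat.minFac_dvd m)
  have h1 : 2 ∣ ∑ i ∈ range 2, (a ^ m) ^ i :=
    h2.trans (mul_comm m 2 ▸ eval_cyclotomic_mul_dvd_geom_sum hm.pos one_lt_two a)
  have h3 : 2 ∣ ∑ i ∈ range m.minFac, (a ^ (2 * m / m.minFac)) ^ i := by
    refine h2.trans ?_
    have := eval_cyclotomic_mul_dvd_geom_sum (m := 2 * m / m.minFac) ?_ hq.one_lt a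
    · rwa [Nat.div_mul_cancel ((Nat.minFac_dvd m).mul_left 2)] at this
    · exact Nat.div_pos ((Nat.minFac_le hm.pos).trans (by omega)) hq.pos
  have ha : Odd a := by
    simpa [sum_range_succ, ← even_iff_two_dvd, parity_simps, hm.pos.ne'] using h1
  have hmod2 := (ZMod.intCast_zmod_eq_zero_iff_dvd _ 2).2 h3
  push_cast [ZMod.intCast_eq_one_iff_odd.2 ha] at hmod2
  simp only [one_pow, sum_const, card_range, nsmul_eq_mul, mul_one,
    ZMod.natCast_eq_zero_iff_even] at hmod2
  exact Nat.not_even_iff_odd.2 hqodd hmod2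

theorem not_sq_dvd_eval_cyclotomic {n p : ℕ} (hn : n ≠ 2) (hp : p.Prime) (hpn : p ∣ n)
    (a : ℤ) : ¬ (p : ℤ) ^ 2 ∣ eval a (cyclotomic n ℤ) := by
  obtain ⟨m, rfl⟩ := hpn
  rcases Nat.eq_zero_or_pos m with rfl | hm
  · intro h
    have := Int.eq_one_of_dvd_one (sq_nonneg _) (by simpa using h)
    nlinarith [hp.two_le]
  intro hsq
  have hsum := hsq.trans (mul_comm m p ▸ eval_cyclotomic_mul_dvd_geom_sum hm hp.one_lt a)
  rcases hp.eq_two_or_odd' with rfl | hodd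
  · rcases Nat.even_or_odd m with ⟨k, rfl⟩ | hmodd
    · refine Int.not_four_dvd_one_add_sq (a ^ k) ?_
      simpa [sum_range_succ, ← pow_mul, mul_two] using hsum
    · exact not_two_dvd_eval_cyclotomic_two_mul hmodd (by omega) a
        ((dvd_pow_self 2 two_ne_zero).trans hsq)
  · exact not_sq_dvd_geom_sum_of_dvd hp hodd ((dvd_pow_self _ two_ne_zero).trans hsum) hsum

theorem Nat.dvd_of_squarefree_of_forall_prime_dvd {r n : ℕ} (hr : Squarefree r) (hn : n ≠ 0)
    (h : ∀ p : ℕ, p.Prime → p ∣ r → p ∣ n) : r ∣ n := by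
  rw [← Nat.prod_primeFactors_of_squarefree hr, Nat.prod_primeFactors_dvd_iff hn]
  intro p hp
  have hp' := Nat.mem_primeFactors.1 hp
  exact Nat.mem_primeFactors.2 ⟨hp'.1, h p hp'.1 hp'.2.1, hn⟩

theorem noncoprime_part_cyclotomic_squarefree_general (n : ℕ) (hn : 3 ≤ n) (a : ℤ)
    (P R : ℕ) (hfact : (Polynomial.cyclotomic n ℤ).eval a = (P : ℤ) * R)
    (hR : ∀ p : ℕ, p.Prime → p ∣ R → p ∣ n) :
    Squarefree R ∧ R ∣ n := by
  have hRΦ : (R : ℤ) ∣ eval a (cyclotomic n ℤ) := Dvd.intro_left _ hfact.symm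
  have hsq : Squarefree R := by
    refine Nat.squarefree_iff_prime_squarefree.2 fun p hp hpR => ?_
    refine not_sq_dvd_eval_cyclotomic (by omega) hp (hR p hp (dvd_of_mul_left_dvd hpR)) a ?_
    refine dvd_trans ?_ hRΦ
    rw [sq]
    exact_mod_cast hpR
  exact ⟨hsq, Nat.dvd_of_squarefree_of_forall_prime_dvd hsq (by omega) hR⟩

theorem noncoprime_part_cyclotomic_squarefree (n : ℕ) (hn : 3 ≤ n) (a : ℤ) (ha : 1 < a)
    (P R : ℕ) (hfact : (Polynomial.cyclotomic n ℤ).eval a = (P : ℤ) * R)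
    (hP : Nat.Coprime P n) (hR : ∀ p : ℕ, p.Prime → p ∣ R → p ∣ n) :
    Squarefree R ∧ R ∣ n :=
  noncoprime_part_cyclotomic_squarefree_general n hn a P R hfact hR
end

section
/- For an integer a ≥ 2 and n a positive integer, Φ_n(a) ≥ a^{φ(n)}/4, where φ is Euler's totient function. -/
/-!
By Möbius inversion of `∏_{d ∣ m} Φ_d(x) = x^m - 1` and of `∑_{d ∣ m} φ(d) = m`,
`Φ_n(x) = x^{φ(n)} ∏_{de = n} (1 - x^{-e})^{μ(d)}`. Every base lies in `(0, 1]` and `μ(d) ≤ 1`,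
so the product is at least `∏_{e ∣ n} (1 - x^{-e}) ≥ ∏_{e ≥ 1} (1 - 2^{-e}) ≥ 1/4` for `x ≥ 2`.
-/

open Finset Polynomial ArithmeticFunction
open scoped ArithmeticFunction.Moebius Nat

-- `1/4` alone is not an inductive bound; the slack `t ^ (n + 2)` pays for the next factor.
theorem quarter_add_pow_le_prod_Icc_one_sub_pow {t : ℝ} (ht0 : 0 ≤ t) (ht : t ≤ 1 / 2) (n : ℕ) :
    1 / 4 + t ^ (n + 2) ≤ ∏ e ∈ Icc 1 (n + 1), (1 - t ^ e) := by
  induction n with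
  | zero => norm_num; nlinarith
  | succ n ih =>
    rw [prod_Icc_succ_top (by omega)]
    have hs0 : 0 ≤ t ^ (n + 2) := by positivity
    have hs : t ^ (n + 2) ≤ 1 / 4 := by
      calc t ^ (n + 2) ≤ t ^ 2 := pow_le_pow_of_le_one ht0 (by linarith) (by omega)
        _ ≤ (1 / 2) ^ 2 := by gcongr
        _ = 1 / 4 := by norm_num
    rw [pow_succ t (n + 2)]
    nlinarith

theorem quarter_le_prod_one_sub_pow {t : ℝ} (ht0 : 0 ≤ t) (ht : t ≤ 1 / 2) {s : Finset ℕ}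
    (hs : 0 ∉ s) : 1 / 4 ≤ ∏ e ∈ s, (1 - t ^ e) := by
  have hsub : s ⊆ Icc 1 (s.sup id + 1) := fun e he => by
    have : e ≤ s.sup id := le_sup (f := id) he
    have : e ≠ 0 := fun h => hs (h ▸ he)
    simp only [mem_Icc]; omega
  have hfac : ∀ e, 0 ≤ 1 - t ^ e ∧ 1 - t ^ e ≤ 1 := fun e =>
    ⟨by linarith [pow_le_one₀ ht0 (by linarith : t ≤ 1) (n := e)], by linarith [pow_nonneg ht0 e]⟩
  calc 1 / 4 ≤ 1 / 4 + t ^ (s.sup id + 2) := by linarith [pow_nonneg ht0 (s.sup id + 2)]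
    _ ≤ ∏ e ∈ Icc 1 (s.sup id + 1), (1 - t ^ e) := quarter_add_pow_le_prod_Icc_one_sub_pow ht0 ht _
    _ ≤ ∏ e ∈ s, (1 - t ^ e) :=
      prod_le_prod_of_subset_of_le_one hsub (fun e _ => (hfac e).1) fun e _ _ => (hfac e).2

theorem self_le_zpow_moebius {y : ℝ} (hy0 : 0 < y) (hy1 : y ≤ 1) (d : ℕ) : y ≤ y ^ μ d := by
  simpa using zpow_le_zpow_right_of_le_one₀ hy0 hy1 (le_of_abs_le abs_moebius_le_one)

theorem prod_divisors_one_sub_pow_le_prod_zpow_moebius {t : ℝ} (ht0 : 0 ≤ t) (ht1 : t < 1)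
    (n : ℕ) :
    ∏ e ∈ n.divisors, (1 - t ^ e) ≤ ∏ p ∈ n.divisorsAntidiagonal, (1 - t ^ p.2) ^ μ p.1 := by
  rw [Nat.prod_divisorsAntidiagonal' (fun d e => (1 - t ^ e) ^ μ d)]
  refine prod_le_prod (fun e _ => by linarith [pow_le_one₀ ht0 ht1.le (n := e)]) fun e he => ?_
  exact self_le_zpow_moebius (by linarith [pow_lt_one₀ ht0 ht1 (Nat.pos_of_mem_divisors he).ne'])
    (by linarith [pow_nonneg ht0 e]) _

theorem cyclotomic_eval_div_pow_totient_eq_prod {x : ℝ} (hx : 1 < x) (n : ℕ) :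
    (cyclotomic n ℝ).eval x / x ^ φ n =
      ∏ p ∈ n.divisorsAntidiagonal, (1 - x⁻¹ ^ p.2) ^ μ p.1 := by
  rcases n.eq_zero_or_pos with rfl | hn
  · simp
  have hx0 : x ≠ 0 := by positivity
  have hf : ∀ i, 0 < i → (cyclotomic i ℝ).eval x / x ^ φ i ≠ 0 := fun i _ =>
    div_ne_zero (cyclotomic_pos' i hx).ne' (pow_ne_zero _ hx0)
  have hg : ∀ m, 0 < m → 1 - x⁻¹ ^ m ≠ 0 := fun m hm =>
    sub_ne_zero.2 (pow_lt_one₀ (by positivity) (inv_lt_one_of_one_lt₀ hx) hm.ne').ne'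
  refine ((prod_eq_iff_prod_pow_moebius_eq_of_nonzero hf hg).1 (fun m hm => ?_) n hn).symm
  rw [prod_div_distrib, ← eval_prod, prod_cyclotomic_eq_X_pow_sub_one hm, prod_pow_eq_pow_sum,
    Nat.sum_totient]
  simp only [eval_sub, eval_pow, eval_X, eval_one, inv_pow]
  field_simp

theorem pow_totient_div_four_le_cyclotomic_eval {x : ℝ} (hx : 2 ≤ x) (n : ℕ) :
    x ^ φ n / 4 ≤ (cyclotomic n ℝ).eval x := by
  have hx0 : 0 < x := by linarith
  have ht0 : 0 ≤ x⁻¹ := inv_nonneg.2 hx0.le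
  have ht : x⁻¹ ≤ 1 / 2 := by rw [one_div]; exact inv_anti₀ two_pos hx
  calc x ^ φ n / 4 ≤ x ^ φ n * ∏ e ∈ n.divisors, (1 - x⁻¹ ^ e) := by
        rw [div_eq_mul_one_div]
        gcongr
        exact quarter_le_prod_one_sub_pow ht0 ht (by simp)
    _ ≤ x ^ φ n * ∏ p ∈ n.divisorsAntidiagonal, (1 - x⁻¹ ^ p.2) ^ μ p.1 := by
        gcongr
        exact prod_divisors_one_sub_pow_le_prod_zpow_moebius ht0 (by linarith) n
    _ = (cyclotomic n ℝ).eval x := by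
        rw [← cyclotomic_eval_div_pow_totient_eq_prod (by linarith), mul_div_cancel₀]
        positivity

theorem cyclotomic_eval_ge_general (n : ℕ) (a : ℤ) (ha : 2 ≤ a) :
    (((Polynomial.cyclotomic n ℤ).eval a : ℤ) : ℝ) ≥ (a : ℝ) ^ (Nat.totient n) / 4 := by
  have h := pow_totient_div_four_le_cyclotomic_eval (x := a) (by exact_mod_cast ha) n
  rwa [← map_cyclotomic_int, eval_intCast_map, eq_intCast] at h

theorem cyclotomic_eval_ge (n : ℕ) (hn : 0 < n) (a : ℤ) (ha : 2 ≤ a) :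
    (((Polynomial.cyclotomic n ℤ).eval a : ℤ) : ℝ) ≥ (a : ℝ) ^ (Nat.totient n) / 4 :=
  cyclotomic_eval_ge_general n a ha
end

section
/- Let a > 1 and m, n be positive integers, and let ℓ be a prime dividing P_m(a) (the m-coprime part of Φ_m(a)) with mℓ > n. Then ord_ℓ(a^n − 1) equals ord_ℓ(P_m(a)) if m divides n, and equals 0 otherwise. -/
/-!
Since `ℓ ∤ m`, a root of `Φ_m` modulo `ℓ` is a primitive `m`-th root of unity, so `a` has order
`m` in `ZMod ℓ` and `ℓ ∣ a ^ n - 1` exactly when `m ∣ n`. For `n = m k` we have `k < ℓ`, so the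
geometric sum `(a ^ (m k) - 1) / (a ^ m - 1) ≡ k` is prime to `ℓ`. In
`a ^ m - 1 = Φ_m(a) ∏_{d ∣ m, d < m} Φ_d(a)` the cofactor is prime to `ℓ` because
`Φ_d(a) ∣ a ^ d - 1`, and in `Φ_m(a) = P R` so is `R`, as its prime factors divide `m`.
-/

open Polynomial

theorem Polynomial.eval_cyclotomic_mul_prod_properDivisors {R : Type*} [CommRing R] {m : ℕ}
    (hm : 0 < m) (a : R) :
    (cyclotomic m R).eval a * ∏ d ∈ m.properDivisors, (cyclotomic d R).eval a = a ^ m - 1 := by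
  have h := congrArg (eval a) (prod_cyclotomic_eq_X_pow_sub_one hm R)
  rw [← Nat.cons_self_properDivisors hm.ne', Finset.prod_cons] at h
  simpa [eval_prod] using h

theorem Int.dvd_pow_sub_one_iff_orderOf_dvd (p : ℕ) (a : ℤ) (d : ℕ) :
    (p : ℤ) ∣ a ^ d - 1 ↔ orderOf (a : ZMod p) ∣ d := by
  rw [← ZMod.intCast_zmod_eq_zero_iff_dvd, orderOf_dvd_iff_pow_eq_one]
  push_cast
  exact sub_eq_zero

section
variable {p : ℕ} [Fact p.Prime]

theorem ZMod.orderOf_intCast_eq_of_dvd_eval_cyclotomic {a : ℤ} {m : ℕ} (hpm : ¬p ∣ m)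
    (h : (p : ℤ) ∣ (cyclotomic m ℤ).eval a) : orderOf (a : ZMod p) = m := by
  have : NeZero (m : ZMod p) := ⟨by rwa [Ne, ZMod.natCast_eq_zero_iff]⟩
  have hroot : (cyclotomic m (ZMod p)).IsRoot (a : ZMod p) := by
    rw [← ZMod.intCast_zmod_eq_zero_iff_dvd] at h
    rwa [IsRoot, ← map_cyclotomic_int, eval_intCast_map]
  exact (isRoot_cyclotomic_iff.mp hroot).eq_orderOf.symm

theorem padicValInt_pow_sub_one_of_not_dvd {x : ℤ} {k : ℕ} (hx : (p : ℤ) ∣ x - 1)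
    (hk : ¬p ∣ k) : padicValInt p (x ^ k - 1) = padicValInt p (x - 1) := by
  rcases eq_or_ne x 1 with rfl | hx1
  · simp
  have hp : Prime (p : ℤ) := Nat.prime_iff_prime_int.mp Fact.out
  have hpx : ¬(p : ℤ) ∣ x := fun h =>
    hp.not_dvd_one (by simpa using dvd_sub h hx)
  have hsum : ¬(p : ℤ) ∣ ∑ i ∈ Finset.range k, x ^ i := by
    simpa using not_dvd_geom_sum₂ hp (y := 1) (by simpa using hx) hpx (by exact_mod_cast hk)
  rw [← geom_sum_mul, padicValInt.mul (fun h => hsum (by simp [h])) (sub_ne_zero.mpr hx1),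
    padicValInt.eq_zero_of_not_dvd hsum, zero_add]

theorem padicValInt_eval_cyclotomic_eq {a : ℤ} {m : ℕ} (hm : 0 < m) (ha : a ^ m ≠ 1)
    (horder : orderOf (a : ZMod p) = m) :
    padicValInt p ((cyclotomic m ℤ).eval a) = padicValInt p (a ^ m - 1) := by
  have hp : Prime (p : ℤ) := Nat.prime_iff_prime_int.mp Fact.out
  have hcofactor : ¬(p : ℤ) ∣ ∏ d ∈ m.properDivisors, (cyclotomic d ℤ).eval a := by
    intro h
    obtain ⟨d, hd, hpd⟩ := hp.exists_mem_finset_dvd h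
    obtain ⟨hdm, hdlt⟩ := Nat.mem_properDivisors.mp hd
    have hd0 : 0 < d := Nat.pos_of_dvd_of_pos hdm hm
    have hpd' : (p : ℤ) ∣ a ^ d - 1 := by
      simpa using hpd.trans (eval_dvd (x := a) (cyclotomic.dvd_X_pow_sub_one d ℤ))
    rw [Int.dvd_pow_sub_one_iff_orderOf_dvd, horder] at hpd'
    exact absurd (Nat.le_of_dvd hd0 hpd') (not_le.mpr hdlt)
  have hfactor := eval_cyclotomic_mul_prod_properDivisors hm a
  obtain ⟨hΦ, hQ⟩ := mul_ne_zero_iff.mp (hfactor ▸ sub_ne_zero.mpr ha)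
  rw [← hfactor, padicValInt.mul hΦ hQ, padicValInt.eq_zero_of_not_dvd hcofactor, add_zero]

end

theorem ord_pow_sub_one_eq (a : ℤ) (ha : 1 < a) (m n : ℕ) (hm : 0 < m) (hn : 0 < n)
    (ℓ : ℕ) (hℓ : ℓ.Prime) (P R : ℕ)
    (hfact : (Polynomial.cyclotomic m ℤ).eval a = (P : ℤ) * R)
    (hP : Nat.Coprime P m) (hR : ∀ p : ℕ, p.Prime → p ∣ R → p ∣ m)
    (hdvd : ℓ ∣ P) (hbig : n < m * ℓ) :
    padicValInt ℓ (a ^ n - 1) = if m ∣ n then padicValNat ℓ P else 0 := by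
  have : Fact ℓ.Prime := ⟨hℓ⟩
  have hℓm : ¬ℓ ∣ m := hℓ.coprime_iff_not_dvd.mp (hP.coprime_dvd_left hdvd)
  have horder : orderOf (a : ZMod ℓ) = m :=
    ZMod.orderOf_intCast_eq_of_dvd_eval_cyclotomic hℓm
      (hfact ▸ (Int.natCast_dvd_natCast.mpr hdvd).mul_right _)
  split_ifs with hmn
  · obtain ⟨k, rfl⟩ := hmn
    have hk : ¬ℓ ∣ k := fun h =>
      (Nat.lt_of_mul_lt_mul_left hbig).not_ge (Nat.le_of_dvd (Nat.pos_of_mul_pos_left hn) h)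
    have hℓR : ¬(ℓ : ℤ) ∣ R := fun h => hℓm (hR ℓ hℓ (Int.natCast_dvd_natCast.mp h))
    obtain ⟨hP0, hR0⟩ := mul_ne_zero_iff.mp (hfact ▸ (cyclotomic_pos' m ha).ne')
    rw [pow_mul, padicValInt_pow_sub_one_of_not_dvd
        ((Int.dvd_pow_sub_one_iff_orderOf_dvd ℓ a m).mpr horder.dvd) hk,
      ← padicValInt_eval_cyclotomic_eq hm (one_lt_pow₀ ha hm.ne').ne' horder, hfact,
      padicValInt.mul hP0 hR0, padicValInt.eq_zero_of_not_dvd hℓR, add_zero, padicValInt.of_nat]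
  · exact padicValInt.eq_zero_of_not_dvd fun h =>
      hmn (horder ▸ (Int.dvd_pow_sub_one_iff_orderOf_dvd ℓ a n).mp h)
end
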